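/- Let p be an odd prime and let G be a generalised multi-edge spinal group in standard form. Let g ∈ G and write g = ψ₁⁻¹(g₁,…,g_p) · a^{ε_a(g)} with g₁,…,g_p ∈ G, and similarly g_i = ψ₁⁻¹(g_{i,1},…,g_{i,p}) · a^{ε_a(g_i)} for each i. Then ∂(g₁) + ⋯ + ∂(g_p) ≤ ∂(g). Moreover, if ∂(g) > 1 then ∂(g_{i,j}) < ∂(g) for all i, j ∈ {1,…,p}. -/

import Mathlib

/-!
Write `g` as a word with `∂(g)` directed syllables. Conjugation by a power of `a` permutes
the first-level vertices, and an element of `⟨b^{(j)}⟩` has an element of `⟨b^{(j)}⟩` as its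
section at one first-level vertex and powers of `a` at all others. Hence every syllable of `g`
contributes one syllable to each section, and each directed one a directed syllable to
exactly one section: `∑ ∂(gᵢ) ≤ ∂(g)`.

For the second claim, if `∂(gᵢ) < ∂(g)` apply the first claim to `gᵢ`. Otherwise all
`N = ∂(g)` syllables land in `gᵢ` as directed ones, so `gᵢ` is a product of `N` directed
elements, consecutive ones from different families since otherwise they would merge.
Such a product fixes the first level, and its section at `y` only receives the syllables of
the family directed through `y`, at most every other one: `∂(g_{i,y}) ≤ ⌈N/2⌉ < N`.
-/

namespace GMS

abbrev Vtx (p : ℕ) := List (Fin p)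

def applyP {p : ℕ} : (Vtx p → Equiv.Perm (Fin p)) → Vtx p → Vtx p
  | _, [] => []
  | f, x :: ω => f [] x :: applyP (fun τ => f (x :: τ)) ω

def invApplyP {p : ℕ} : (Vtx p → Equiv.Perm (Fin p)) → Vtx p → Vtx p
  | _, [] => []
  | f, y :: ω => (f []).symm y :: invApplyP (fun τ => f ((f []).symm y :: τ)) ω

theorem applyP_invApplyP {p : ℕ} (f : Vtx p → Equiv.Perm (Fin p)) (ω : Vtx p) :
    applyP f (invApplyP f ω) = ω := by
  induction ω generalizing f with
  | nil => rfl
  | cons y ω ih => simp [applyP, invApplyP, ih]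

theorem invApplyP_applyP {p : ℕ} (f : Vtx p → Equiv.Perm (Fin p)) (ω : Vtx p) :
    invApplyP f (applyP f ω) = ω := by
  induction ω generalizing f with
  | nil => rfl
  | cons x ω ih => simp [applyP, invApplyP, ih]

def toPerm {p : ℕ} (f : Vtx p → Equiv.Perm (Fin p)) : Equiv.Perm (Vtx p) :=
  ⟨applyP f, invApplyP f, invApplyP_applyP f, applyP_invApplyP f⟩

def treeAut (p : ℕ) : Subgroup (Equiv.Perm (Vtx p)) where
  carrier := {f | ∀ ω ω' : Vtx p, ω <+: ω' → f ω <+: f ω' ∧ f.symm ω <+: f.symm ω'}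
  one_mem' := fun _ _ h => ⟨h, h⟩
  mul_mem' := by
    intro f g hf hg ω ω' h
    exact ⟨(hf _ _ (hg _ _ h).1).1, (hg _ _ (hf _ _ h).2).2⟩
  inv_mem' := by
    intro f hf ω ω' h
    exact ⟨(hf _ _ h).2, (hf _ _ h).1⟩

theorem applyP_append {p : ℕ} (f : Vtx p → Equiv.Perm (Fin p)) (ω t : Vtx p) :
    applyP f (ω ++ t) = applyP f ω ++ applyP (fun τ => f (ω ++ τ)) t := by
  induction ω generalizing f with
  | nil => rfl
  | cons x ω ih => simp [applyP, ih]

theorem invApplyP_append {p : ℕ} (f : Vtx p → Equiv.Perm (Fin p)) (ω t : Vtx p) :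
    invApplyP f (ω ++ t) =
      invApplyP f ω ++ invApplyP (fun τ => f (invApplyP f ω ++ τ)) t := by
  induction ω generalizing f with
  | nil => rfl
  | cons x ω ih => simp [invApplyP, ih]

theorem toPerm_mem_treeAut {p : ℕ} (f : Vtx p → Equiv.Perm (Fin p)) :
    toPerm f ∈ treeAut p := by
  intro ω ω' h
  obtain ⟨t, rfl⟩ := h
  exact ⟨⟨_, (applyP_append f ω t).symm⟩, ⟨_, (invApplyP_append f ω t).symm⟩⟩

/-- The `p`-cycle `x ↦ x + 1` on `Fin p`. -/
def rootCycle (p : ℕ) [NeZero p] : Equiv.Perm (Fin p) := Equiv.addRight 1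

/-- The rooted automorphism `a`, cyclically permuting the first-level subtrees. -/
def aAut (p : ℕ) [NeZero p] : Equiv.Perm (Vtx p) :=
  toPerm (fun ω => if ω = [] then rootCycle p else 1)

/-- Conversion of a non-zero residue position to an index in `Fin (p-1)`. -/
def offIdx {p : ℕ} (hp1 : 1 < p) (k : Fin p) : Fin (p - 1) :=
  ⟨k.val - 1, by have := k.isLt; omega⟩

/-- The portrait of a directed automorphism with directing path `c, cc, ccc, …` and
defining vector `e`: its section at the first-level vertex `c` is itself, and its
section at a first-level vertex `c + k` (for `k ≠ 0`) is `a^{e_k}`. -/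
def dirPort {p : ℕ} [NeZero p] (hp1 : 1 < p) (c : Fin p) (e : Fin (p - 1) → ZMod p) :
    Vtx p → Equiv.Perm (Fin p)
  | [] => 1
  | [x] => if x = c then 1 else rootCycle p ^ (e (offIdx hp1 (x - c))).val
  | x :: y :: ω => if x = c then dirPort hp1 c e (y :: ω) else 1

/-- The directed automorphism with directing path `c, cc, ccc, …` and defining
vector `e`; it satisfies `ψ₁(b) = (…, a^{e_k} at position c + k, …, b at position c, …)`. -/
def dirAut {p : ℕ} [NeZero p] (hp1 : 1 < p) (c : Fin p) (e : Fin (p - 1) → ZMod p) :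
    Equiv.Perm (Vtx p) :=
  toPerm (dirPort hp1 c e)

/-- Defining data for a generalised multi-edge spinal group in standard form:
for each `j`, an `r j`-tuple of linearly independent defining vectors in `(ℤ/pℤ)^{p-1}`. -/
structure SpinalData (p : ℕ) where
  r : Fin p → ℕ
  r_le : ∀ j, r j ≤ p - 1
  r_ne : ∃ j, r j ≠ 0
  e : (j : Fin p) → Fin (r j) → Fin (p - 1) → ZMod p
  indep : ∀ j, LinearIndependent (ZMod p) (e j)

/-- The directing-path letter of the `j`-th family (`j` is 0-indexed; the paper's
family `j+1` is directed along the constant path with letter `p - j - 1`). -/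
def pathLetter {p : ℕ} [NeZero p] (j : Fin p) : Fin p := -(j + 1)

/-- The directed generator `b^{(j)}_i`. -/
def SpinalData.gen {p : ℕ} [NeZero p] (D : SpinalData p) (hp1 : 1 < p)
    (j : Fin p) (i : Fin (D.r j)) : Equiv.Perm (Vtx p) :=
  dirAut hp1 (pathLetter j) (D.e j i)

/-- The generating set `{a} ∪ {b^{(j)}_i}`. -/
def SpinalData.genSet {p : ℕ} [NeZero p] (D : SpinalData p) (hp1 : 1 < p) :
    Set (Equiv.Perm (Vtx p)) :=
  insert (aAut p) {g | ∃ j i, g = D.gen hp1 j i}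

/-- The generalised multi-edge spinal group in standard form associated to `D`. -/
def SpinalData.grp {p : ℕ} [NeZero p] (D : SpinalData p) (hp1 : 1 < p) :
    Subgroup (Equiv.Perm (Vtx p)) :=
  Subgroup.closure (D.genSet hp1)

theorem aAut_mem_grp {p : ℕ} [NeZero p] (D : SpinalData p) (hp1 : 1 < p) :
    aAut p ∈ D.grp hp1 :=
  Subgroup.subset_closure (Set.mem_insert _ _)

theorem gen_mem_grp {p : ℕ} [NeZero p] (D : SpinalData p) (hp1 : 1 < p)
    (j : Fin p) (i : Fin (D.r j)) : D.gen hp1 j i ∈ D.grp hp1 :=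
  Subgroup.subset_closure (Set.mem_insert_iff.mpr (Or.inr ⟨j, i, rfl⟩))

/-- `ψ₁(g) = (s 0, …, s (p-1))`: the element `g` stabilises the first level and has
section `s x` at the first-level vertex `x`. -/
def hasSections {p : ℕ} (g : Equiv.Perm (Vtx p)) (s : Fin p → Equiv.Perm (Vtx p)) : Prop :=
  ∀ (x : Fin p) (τ : Vtx p), g (x :: τ) = x :: s x τ

/-- `g` fixes the vertex `u` and acts on the subtree rooted at `u` as `s` (under the
natural identification of the subtree with the whole tree). -/
def sectionAt {p : ℕ} (u : Vtx p) (g s : Equiv.Perm (Vtx p)) : Prop :=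
  ∀ τ : Vtx p, g (u ++ τ) = u ++ s τ

/-- The pointwise stabiliser of the `n`-th level of the tree. -/
def levelStab (p : ℕ) (n : ℕ) : Subgroup (Equiv.Perm (Vtx p)) where
  carrier := {g | ∀ ω : Vtx p, ω.length = n → g ω = ω}
  one_mem' := fun _ _ => rfl
  mul_mem' := by
    intro f g hf hg ω hω
    have := hg ω hω
    simp only [Equiv.Perm.mul_apply, this]
    exact hf ω hω
  inv_mem' := by
    intro f hf ω hω
    have := hf ω hω
    calc f⁻¹ ω = f⁻¹ (f ω) := by rw [this]
    _ = ω := f.symm_apply_apply ω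

/-- Spherical transitivity: `G` acts transitively on every level of the tree. -/
def SphericallyTransitive (p : ℕ) (G : Subgroup (Equiv.Perm (Vtx p))) : Prop :=
  ∀ ω ω' : Vtx p, ω.length = ω'.length → ∃ g ∈ G, g ω = ω'

/-- `G` is fractal: it is spherically transitive and for every vertex `u`, the
restriction to the subtree rooted at `u` of the stabiliser of `u` in `G` is `G` itself. -/
def Fractal (p : ℕ) (G : Subgroup (Equiv.Perm (Vtx p))) : Prop :=
  SphericallyTransitive p G ∧
    ∀ (u : Vtx p) (s : Equiv.Perm (Vtx p)), s ∈ G ↔ ∃ g ∈ G, sectionAt u g s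

/-- `G` is regular branch over `K`: `G` is fractal, `K` is a non-trivial subgroup of
`Stab_G(1)` of finite index in `G`, and `K × ⋯ × K ⊆ ψ₁(K)`. -/
def RegularBranch (p : ℕ) (G K : Subgroup (Equiv.Perm (Vtx p))) : Prop :=
  Fractal p G ∧ K ≠ ⊥ ∧ K ≤ G ⊓ levelStab p 1 ∧ K.relIndex G ≠ 0 ∧
    ∀ s : Fin p → Equiv.Perm (Vtx p), (∀ x, s x ∈ K) → ∃ g ∈ K, hasSections g s

/-- The third term `γ₃(H) = [[H,H],H]` of the lower central series. -/
def gamma3 {Γ : Type*} [Group Γ] (H : Subgroup Γ) : Subgroup Γ := ⁅(⁅H, H⁆ : Subgroup Γ), H⁆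

/-- Rigid stabiliser (in the full permutation group) of the vertex `u`: permutations
fixing every vertex not having `u` as a prefix. -/
def rigidStab (p : ℕ) (u : Vtx p) : Subgroup (Equiv.Perm (Vtx p)) where
  carrier := {g | ∀ ω : Vtx p, ¬ u <+: ω → g ω = ω}
  one_mem' := fun _ _ => rfl
  mul_mem' := by
    intro f g hf hg ω hω
    have := hg ω hω
    simp only [Equiv.Perm.mul_apply, this]
    exact hf ω hω
  inv_mem' := by
    intro f hf ω hω
    have := hf ω hω
    calc f⁻¹ ω = f⁻¹ (f ω) := by rw [this]
    _ = ω := f.symm_apply_apply ω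

/-- The rigid `n`-th level stabiliser of `G`: the subgroup generated by (equivalently,
the product of) the rigid vertex stabilisers of the vertices at level `n`. -/
def rigidLevelStab (p : ℕ) (G : Subgroup (Equiv.Perm (Vtx p))) (n : ℕ) :
    Subgroup (Equiv.Perm (Vtx p)) :=
  ⨆ u ∈ {u : Vtx p | u.length = n}, (G ⊓ rigidStab p u)

/-- `G` is a branch group (with respect to its action on the regular rooted tree). -/
def Branch (p : ℕ) (G : Subgroup (Equiv.Perm (Vtx p))) : Prop :=
  SphericallyTransitive p G ∧ ∀ n : ℕ, (rigidLevelStab p G n).relIndex G ≠ 0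

/-- An infinite group all of whose proper quotients are finite. -/
def JustInfinite {Γ : Type*} [Group Γ] (G : Subgroup Γ) : Prop :=
  (G : Set Γ).Infinite ∧
    ∀ N : Subgroup ↥G, N.Normal → N ≠ ⊥ → N.FiniteIndex

/-- The conjugate subgroup `x H x⁻¹`. -/
def conjSub {Γ : Type*} [Group Γ] (x : Γ) (H : Subgroup Γ) : Subgroup Γ :=
  H.map (MulAut.conj x).toMonoidHom

/-- `M` is a dense subgroup of `G` with respect to the profinite topology on `G`:
`NM = G` for every normal subgroup `N` of `G` of finite index. -/
def DenseIn {Γ : Type*} [Group Γ] (M G : Subgroup Γ) : Prop :=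
  M ≤ G ∧ ∀ N : Subgroup Γ, N ≤ G → (N.subgroupOf G).Normal → N.relIndex G ≠ 0 →
    G ≤ N ⊔ M

/-- The restriction to the subtree rooted at `u` of the stabiliser of `u` in `M`
(the "upper companion" subgroup `M_u`), under the identification of the subtree with
the whole tree. -/
def restrAt (p : ℕ) (u : Vtx p) (M : Subgroup (Equiv.Perm (Vtx p))) :
    Subgroup (Equiv.Perm (Vtx p)) where
  carrier := {s | ∃ g ∈ M, sectionAt u g s}
  one_mem' := ⟨1, M.one_mem, fun τ => rfl⟩
  mul_mem' := by
    rintro s s' ⟨g, hg, hgs⟩ ⟨g', hg', hgs'⟩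
    refine ⟨g * g', M.mul_mem hg hg', fun τ => ?_⟩
    simp only [Equiv.Perm.mul_apply, hgs' τ, hgs (s' τ)]
  inv_mem' := by
    rintro s ⟨g, hg, hgs⟩
    refine ⟨g⁻¹, M.inv_mem hg, fun τ => ?_⟩
    have h1 : g (u ++ s⁻¹ τ) = u ++ τ := by
      rw [hgs (s⁻¹ τ)]
      simp
    calc g⁻¹ (u ++ τ) = g⁻¹ (g (u ++ s⁻¹ τ)) := by rw [h1]
    _ = u ++ s⁻¹ τ := g.symm_apply_apply _

/-- Index `p - i` (`0`-indexed version of `i ↦ p - i` on `{1, …, p-1}`). -/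
def revIdx {p : ℕ} (k : Fin (p - 1)) : Fin (p - 1) :=
  ⟨p - 2 - k.val, by have := k.isLt; omega⟩


/-- Non-constancy of a defining vector. -/
def IsNonConstant {p : ℕ} (v : Fin (p - 1) → ZMod p) : Prop :=
  ¬ ∃ α : ZMod p, ∀ k, v k = α

/-- The regularity condition defining the subclass `𝒞_reg`: every non-empty family
of defining vectors contains a non-constant vector. -/
def SpinalData.IsReg {p : ℕ} (D : SpinalData p) : Prop :=
  ∀ j, D.r j ≠ 0 → ∃ i, IsNonConstant (D.e j i)

/-- Non-symmetry of a defining vector: `e_i ≠ e_{p-i}` for some `i`. -/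
def IsNonSymmetric {p : ℕ} (v : Fin (p - 1) → ZMod p) : Prop :=
  ∃ k, v k ≠ v (revIdx k)

/-- Membership in the class `𝒞`: subgroups of `Aut(T)` conjugate to a generalised
multi-edge spinal group in standard form. -/
def inC (p : ℕ) [NeZero p] (hp1 : 1 < p) (G : Subgroup (Equiv.Perm (Vtx p))) : Prop :=
  ∃ (D : SpinalData p) (x : Equiv.Perm (Vtx p)), x ∈ treeAut p ∧
    G = (D.grp hp1).map (MulAut.conj x).toMonoidHom

/-- Membership in the subclass `𝒞_reg`. -/
def inCreg (p : ℕ) [NeZero p] (hp1 : 1 < p) (G : Subgroup (Equiv.Perm (Vtx p))) : Prop :=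
  ∃ (D : SpinalData p) (x : Equiv.Perm (Vtx p)), x ∈ treeAut p ∧ D.IsReg ∧
    G = (D.grp hp1).map (MulAut.conj x).toMonoidHom

/-- The subgroup `⟨b^{(j)}_1, …, b^{(j)}_{r_j}⟩` generated by the `j`-th family of
directed generators. -/
def SpinalData.bFam {p : ℕ} [NeZero p] (D : SpinalData p) (hp1 : 1 < p) (j : Fin p) :
    Subgroup (Equiv.Perm (Vtx p)) :=
  Subgroup.closure (Set.range (D.gen hp1 j))

/-- `g` can be written as an alternating product
`c₀ d₀ c₁ d₁ ⋯ c_{N-1} d_{N-1} c_N` with each `cₖ` a power of `a` and each `dₖ` an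
element of one of the groups `⟨𝐛^{(j)}⟩`; the number of directed syllables is `N`. -/
def lenWitness {p : ℕ} [NeZero p] (D : SpinalData p) (hp1 : 1 < p)
    (g : Equiv.Perm (Vtx p)) (N : ℕ) : Prop :=
  ∃ (c : Fin (N + 1) → Equiv.Perm (Vtx p)) (d : Fin N → Equiv.Perm (Vtx p)),
    (∀ k, c k ∈ Subgroup.zpowers (aAut p)) ∧
    (∀ k, ∃ j, d k ∈ D.bFam hp1 j) ∧
    g = (List.ofFn fun k : Fin N => c k.castSucc * d k).prod * c (Fin.last N)

/-- The length `∂(g)`: the minimal number of directed syllables needed to express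
`g`; this coincides with the minimum over all preimages of `g` in the free product
`⟨â⟩ * ⟨𝐛̂^{(1)}⟩ * ⋯ * ⟨𝐛̂^{(p)}⟩` of the number of syllables of the normal form
lying in the directed factors. -/
noncomputable def dlen {p : ℕ} [NeZero p] (D : SpinalData p) (hp1 : 1 < p)
    (g : Equiv.Perm (Vtx p)) : ℕ :=
  sInf {N | lenWitness D hp1 g N}

theorem two_mul_countP_le_of_isChain {α : Type*} (P : α → Bool) :
    ∀ {l : List α}, l.IsChain (fun a b => ¬ (P a ∧ P b)) → 2 * l.countP P ≤ l.length + 1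
  | [], _ => by simp
  | [a], _ => by simp only [List.countP_singleton, List.length_singleton]; split <;> omega
  | a :: b :: l, h => by
    rw [List.isChain_cons_cons] at h
    have ihl := two_mul_countP_le_of_isChain P h.2.tail
    have ihbl := two_mul_countP_le_of_isChain P h.2
    simp only [List.countP_cons, List.length_cons] at ihbl ⊢
    by_cases ha : P a <;> by_cases hb : P b <;> simp_all <;> omega

section Sections

variable {p : ℕ}

theorem applyP_one (ω : Vtx p) : applyP (fun _ => (1 : Equiv.Perm (Fin p))) ω = ω := by
  induction ω with
  | nil => rfl
  | cons x ω ih => simpa [applyP] using ih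

variable {f g : Equiv.Perm (Vtx p)} {s t : Fin p → Equiv.Perm (Vtx p)}

theorem hasSections_one : hasSections (1 : Equiv.Perm (Vtx p)) 1 := fun _ _ => rfl

theorem hasSections.mul (hf : hasSections f s) (hg : hasSections g t) :
    hasSections (f * g) (s * t) := by
  intro x τ
  simp only [Equiv.Perm.mul_apply, hg x τ, hf x (t x τ), Pi.mul_apply]

theorem hasSections.inv (hf : hasSections f s) : hasSections f⁻¹ s⁻¹ := by
  intro x τ
  rw [Equiv.Perm.inv_eq_iff_eq, hf]
  simp

variable [NeZero p]
open Fin.NatCast Fin.CommRing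

theorem aAut_cons (x : Fin p) (τ : Vtx p) : aAut p (x :: τ) = (x + 1) :: τ := by
  simp [aAut, toPerm, applyP, applyP_one, rootCycle]

theorem aAut_pow_apply_nil (n : ℕ) : (aAut p ^ n) [] = [] := by
  induction n with
  | zero => rfl
  | succ n ih => rw [pow_succ', Equiv.Perm.mul_apply, ih]; rfl

theorem aAut_pow_apply_cons (n : ℕ) (x : Fin p) (τ : Vtx p) :
    (aAut p ^ n) (x :: τ) = (x + n) :: τ := by
  induction n generalizing x with
  | zero => simp
  | succ n ih =>
    rw [pow_succ, Equiv.Perm.mul_apply, aAut_cons, ih]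
    push_cast
    ring_nf

theorem aAut_pow_inv_apply_cons (n : ℕ) (x : Fin p) (τ : Vtx p) :
    (aAut p ^ n)⁻¹ (x :: τ) = (x - n) :: τ := by
  rw [Equiv.Perm.inv_eq_iff_eq, aAut_pow_apply_cons, sub_add_cancel]

theorem aAut_pow_self : aAut p ^ p = 1 := by
  ext1 ω
  cases ω with
  | nil => exact aAut_pow_apply_nil p
  | cons x τ => simp [aAut_pow_apply_cons]

theorem exists_aAut_pow_eq_of_mem_zpowers {c : Equiv.Perm (Vtx p)}
    (hc : c ∈ Subgroup.zpowers (aAut p)) : ∃ n : ℕ, aAut p ^ n = c :=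
  (isOfFinOrder_iff_pow_eq_one.mpr ⟨p, NeZero.pos p, aAut_pow_self⟩).mem_powers_iff_mem_zpowers.mpr
    hc

theorem hasSections.conj_aAut_pow (hf : hasSections f s) (n : ℕ) :
    hasSections (aAut p ^ n * f * (aAut p ^ n)⁻¹) (fun x => s (x - n)) := by
  intro x τ
  simp only [Equiv.Perm.mul_apply, aAut_pow_inv_apply_cons, hf (x - n) τ, aAut_pow_apply_cons,
    sub_add_cancel]

theorem hasSections_aAut_pow {n : ℕ} (h : hasSections (aAut p ^ n) s) : s = 1 := by
  funext x
  ext1 τ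
  exact (List.cons.inj ((aAut_pow_apply_cons n x τ).symm.trans (h x τ))).2.symm

theorem hasSections.eq_of_mul_aAut_pow_inv {k l : ℕ}
    (hs : hasSections (g * (aAut p ^ k)⁻¹) s) (ht : hasSections (g * (aAut p ^ l)⁻¹) t) :
    s = t := by
  obtain ⟨n, hn⟩ := exists_aAut_pow_eq_of_mem_zpowers (c := aAut p ^ k * (aAut p ^ l)⁻¹)
    (Subgroup.mul_mem _ (Subgroup.npow_mem_zpowers _ k)
      (Subgroup.inv_mem _ (Subgroup.npow_mem_zpowers _ l)))
  have h : hasSections (aAut p ^ n) (s⁻¹ * t) := by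
    rw [hn, show aAut p ^ k * (aAut p ^ l)⁻¹ = (g * (aAut p ^ k)⁻¹)⁻¹ * (g * (aAut p ^ l)⁻¹) by
      group]
    exact hs.inv.mul ht
  exact inv_mul_eq_one.mp (hasSections_aAut_pow h)

end Sections

section Directed

variable {p : ℕ} [NeZero p]
open Fin.NatCast Fin.CommRing

theorem rootCycle_pow_apply (m : ℕ) (y : Fin p) : (rootCycle p ^ m) y = y + m := by
  induction m generalizing y with
  | zero => simp
  | succ m ih =>
    rw [pow_succ, Equiv.Perm.mul_apply, ih]
    simp only [rootCycle, Equiv.coe_addRight, Nat.cast_succ]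
    ring

theorem applyP_rootCycle_pow (m : ℕ) :
    applyP (fun ω => if ω = [] then rootCycle p ^ m else 1) = ⇑(aAut p ^ m) := by
  funext τ
  cases τ with
  | nil => exact (aAut_pow_apply_nil m).symm
  | cons y ω => simp [applyP, applyP_one, rootCycle_pow_apply, aAut_pow_apply_cons]

theorem dirPort_cons_self (hp1 : 1 < p) (c : Fin p) (e : Fin (p - 1) → ZMod p) :
    (fun τ => dirPort hp1 c e (c :: τ)) = dirPort hp1 c e := by
  funext τ
  cases τ <;> simp [dirPort]

theorem hasSections_dirAut (hp1 : 1 < p) (c : Fin p) (e : Fin (p - 1) → ZMod p) :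
    hasSections (dirAut hp1 c e)
      (fun x => if x = c then dirAut hp1 c e else aAut p ^ (e (offIdx hp1 (x - c))).val) := by
  intro x τ
  change (1 : Equiv.Perm (Fin p)) x :: applyP (fun τ' => dirPort hp1 c e (x :: τ')) τ = _
  by_cases hx : x = c
  · subst hx
    simp only [dirPort_cons_self]
    rfl
  · have : (fun τ' => dirPort hp1 c e (x :: τ')) =
        fun ω => if ω = [] then rootCycle p ^ (e (offIdx hp1 (x - c))).val else 1 := by
      funext τ'
      cases τ' <;> simp [dirPort, hx]
    rw [this, applyP_rootCycle_pow]
    simp [hx]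

theorem pathLetter_injective : Function.Injective (pathLetter (p := p)) :=
  fun _ _ h => add_right_cancel (neg_injective h)

variable (D : SpinalData p) (hp1 : 1 < p)

/-- The free factors of `Ĝ`, seen inside `G`: `none` stands for `⟨a⟩` and `some j` for
`⟨b^{(j)}⟩`. -/
def syllable : Option (Fin p) → Subgroup (Equiv.Perm (Vtx p))
  | none => Subgroup.zpowers (aAut p)
  | some j => D.bFam hp1 j

theorem exists_hasSections_of_mem_bFam {j : Fin p} {d : Equiv.Perm (Vtx p)}
    (hd : d ∈ D.bFam hp1 j) : ∃ σ, hasSections d σ ∧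
      ∀ x, σ x ∈ syllable D hp1 (if x = pathLetter j then some j else none) := by
  induction hd using Subgroup.closure_induction with
  | mem g hg =>
    obtain ⟨i, rfl⟩ := hg
    refine ⟨_, hasSections_dirAut hp1 _ _, fun x => ?_⟩
    split_ifs
    · exact Subgroup.subset_closure (Set.mem_range_self i)
    · exact Subgroup.npow_mem_zpowers _ _
  | one => exact ⟨1, hasSections_one, fun x => Subgroup.one_mem _⟩
  | mul g g' _ _ ihg ihg' =>
    obtain ⟨σ, hσ, hσmem⟩ := ihg
    obtain ⟨σ', hσ', hσ'mem⟩ := ihg'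
    exact ⟨σ * σ', hσ.mul hσ', fun x => Subgroup.mul_mem _ (hσmem x) (hσ'mem x)⟩
  | inv g _ ihg =>
    obtain ⟨σ, hσ, hσmem⟩ := ihg
    exact ⟨σ⁻¹, hσ.inv, fun x => Subgroup.inv_mem _ (hσmem x)⟩

end Directed

/-- A word representing an element of `Ĝ`: a list of syllables, each tagged by its free
factor as in `syllable`; `Word.eval` is `π`. -/
abbrev Word (p : ℕ) := List (Option (Fin p) × Equiv.Perm (Vtx p))

def Word.eval {p : ℕ} (w : Word p) : Equiv.Perm (Vtx p) := (w.map Prod.snd).prod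

def Word.numDirected {p : ℕ} (w : Word p) : ℕ := w.countP fun e => e.1.isSome

section Words

variable {p : ℕ} [NeZero p] (D : SpinalData p) (hp1 : 1 < p)

def IsWord (w : Word p) : Prop := ∀ e ∈ w, e.2 ∈ syllable D hp1 e.1

variable {D hp1}
variable {g c d : Equiv.Perm (Vtx p)} {N : ℕ}

theorem lenWitness_zero_of_mem_zpowers (hc : c ∈ Subgroup.zpowers (aAut p)) :
    lenWitness D hp1 c 0 :=
  ⟨fun _ => c, Fin.elim0, fun _ => hc, fun k => k.elim0, by simp⟩

theorem lenWitness.zpowers_mul (h : lenWitness D hp1 g N) (hc : c ∈ Subgroup.zpowers (aAut p)) :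
    lenWitness D hp1 (c * g) N := by
  obtain ⟨c', d, hc', hd, rfl⟩ := h
  refine ⟨Function.update c' 0 (c * c' 0), d, fun k => ?_, hd, ?_⟩
  · by_cases hk : k = 0
    · subst hk
      simpa using Subgroup.mul_mem _ hc (hc' 0)
    · simpa [Function.update_of_ne hk] using hc' k
  · cases N with
    | zero => simp [Fin.last]
    | succ N => simp [List.ofFn_succ, mul_assoc]

theorem lenWitness.bFam_mul (h : lenWitness D hp1 g N) {j : Fin p} (hd : d ∈ D.bFam hp1 j) :
    lenWitness D hp1 (d * g) (N + 1) := by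
  obtain ⟨c, d', hc, hd', rfl⟩ := h
  refine ⟨Fin.cons 1 c, Fin.cons d d', Fin.cases (Subgroup.one_mem _) hc,
    Fin.cases ⟨j, hd⟩ hd', ?_⟩
  simp [List.ofFn_succ, ← Fin.succ_last, mul_assoc]

theorem IsWord.lenWitness {w : Word p} (hw : IsWord D hp1 w) :
    lenWitness D hp1 w.eval w.numDirected := by
  induction w with
  | nil => exact lenWitness_zero_of_mem_zpowers (Subgroup.one_mem _)
  | cons e w ih =>
    have ⟨he, hw'⟩ := List.forall_mem_cons.mp hw
    rcases e with ⟨_ | j, g⟩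
    · simpa [Word.eval, Word.numDirected] using (ih hw').zpowers_mul he
    · simpa [Word.eval, Word.numDirected] using (ih hw').bFam_mul he

theorem dlen_le_numDirected {w : Word p} (hw : IsWord D hp1 w) :
    dlen D hp1 w.eval ≤ w.numDirected :=
  Nat.sInf_le hw.lenWitness

theorem lenWitness.exists_word (h : lenWitness D hp1 g N) :
    ∃ w, IsWord D hp1 w ∧ w.eval = g ∧ w.numDirected = N := by
  obtain ⟨c, d, hc, hd, rfl⟩ := h
  choose j hj using hd
  refine ⟨(List.ofFn fun k => [(none, c k.castSucc), (some (j k), d k)]).flatten ++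
    [(none, c (Fin.last N))], ?_, ?_, ?_⟩
  · simp only [IsWord, List.mem_append, List.mem_flatten, List.mem_ofFn, List.mem_cons]
    rintro e (⟨_, ⟨k, rfl⟩, he⟩ | rfl | he)
    · simp only [List.mem_cons, List.not_mem_nil, or_false] at he
      rcases he with rfl | rfl
      exacts [hc _, hj k]
    · exact hc _
    · simp at he
  · simp [Word.eval, List.prod_flatten, Function.comp_def]
  · simp [Word.numDirected, List.countP_flatten, Function.comp_def]

theorem exists_word_of_mem_grp (hg : g ∈ D.grp hp1) : ∃ w, IsWord D hp1 w ∧ w.eval = g := by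
  induction hg using Subgroup.closure_induction with
  | mem g hg =>
    rcases Set.mem_insert_iff.mp hg with rfl | ⟨j, i, rfl⟩
    · exact ⟨[(none, aAut p)], List.forall_mem_singleton.mpr (Subgroup.mem_zpowers _),
        by simp [Word.eval]⟩
    · exact ⟨[(some j, D.gen hp1 j i)],
        List.forall_mem_singleton.mpr (Subgroup.subset_closure (Set.mem_range_self i)),
        by simp [Word.eval]⟩
  | one => exact ⟨[], by simp [IsWord], rfl⟩
  | mul g g' _ _ ihg ihg' =>
    obtain ⟨w, hw, rfl⟩ := ihg
    obtain ⟨w', hw', rfl⟩ := ihg'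
    exact ⟨w ++ w', List.forall_mem_append.mpr ⟨hw, hw'⟩, by simp [Word.eval]⟩
  | inv g _ ihg =>
    obtain ⟨w, hw, rfl⟩ := ihg
    refine ⟨(w.map fun e => (e.1, e.2⁻¹)).reverse, ?_, ?_⟩
    · simp only [IsWord, List.mem_reverse, List.mem_map]
      rintro _ ⟨e, he, rfl⟩
      exact Subgroup.inv_mem _ (hw e he)
    · simp [Word.eval, List.prod_inv_reverse, Function.comp_def]

theorem exists_word_numDirected_eq_dlen (hg : g ∈ D.grp hp1) :
    ∃ w, IsWord D hp1 w ∧ w.eval = g ∧ w.numDirected = dlen D hp1 g := by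
  obtain ⟨w, hw, rfl⟩ := exists_word_of_mem_grp hg
  exact lenWitness.exists_word (Nat.sInf_mem (s := {N | lenWitness D hp1 w.eval N})
    ⟨_, hw.lenWitness⟩)

/-- Two adjacent syllables from the same free factor can be merged into one. -/
theorem IsWord.exists_shorter {w : Word p} (hw : IsWord D hp1 w)
    (hch : ¬ w.IsChain fun e e' => e.1 ≠ e'.1) :
    ∃ v, IsWord D hp1 v ∧ v.eval = w.eval ∧ v.length < w.length := by
  match w, hw, hch with
  | [], _, hch => exact absurd List.IsChain.nil hch
  | [_], _, hch => exact absurd (List.IsChain.singleton _) hch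
  | e :: e' :: w, hw, hch =>
    obtain ⟨he, he', hw⟩ : _ ∧ _ ∧ IsWord D hp1 w := by simpa [IsWord] using hw
    by_cases hee : e.1 = e'.1
    · refine ⟨(e.1, e.2 * e'.2) :: w, ?_, by simp [Word.eval, mul_assoc], by simp⟩
      exact List.forall_mem_cons.mpr ⟨Subgroup.mul_mem _ he (hee ▸ he'), hw⟩
    · obtain ⟨v, hv, hveq, hvlen⟩ := IsWord.exists_shorter (w := e' :: w)
        (List.forall_mem_cons.mpr ⟨he', hw⟩) (by simpa [hee] using hch)
      refine ⟨e :: v, List.forall_mem_cons.mpr ⟨he, hv⟩, ?_, by simpa using hvlen⟩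
      simp only [Word.eval, List.map_cons, List.prod_cons] at hveq ⊢
      rw [hveq]

open Fin.NatCast Fin.CommRing in
/-- Each syllable of `w` contributes one syllable to every first-level section of `w.eval`,
and a directed syllable contributes a directed one at exactly one vertex. -/
theorem IsWord.exists_sections {w : Word p} (hw : IsWord D hp1 w) :
    ∃ (k : ℕ) (s : Fin p → Equiv.Perm (Vtx p)) (ws : Fin p → Word p),
      hasSections (w.eval * (aAut p ^ k)⁻¹) s ∧
      (∀ x, IsWord D hp1 (ws x) ∧ (ws x).eval = s x ∧ (ws x).length ≤ w.numDirected) ∧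
      ∑ x, (ws x).numDirected ≤ w.numDirected := by
  induction w with
  | nil =>
    exact ⟨0, 1, fun _ => [], by simpa [Word.eval] using hasSections_one,
      fun _ => by simp [IsWord, Word.eval], by simp [Word.numDirected]⟩
  | cons e w ih =>
    obtain ⟨he, hw'⟩ := List.forall_mem_cons.mp hw
    obtain ⟨k, s, ws, hs, hws, hsum⟩ := ih hw'
    rcases e with ⟨_ | j, c⟩
    · obtain ⟨m, rfl⟩ := exists_aAut_pow_eq_of_mem_zpowers he
      refine ⟨m + k, fun x => s (x - m), fun x => ws (x - m), ?_, fun x => ?_, ?_⟩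
      · convert hs.conj_aAut_pow m using 1
        simp only [Word.eval, List.map_cons, List.prod_cons, pow_add]
        group
      · simpa [Word.numDirected] using hws (x - m)
      · simpa [Word.numDirected] using
          (Equiv.sum_comp (Equiv.subRight (m : Fin p)) fun x => (ws x).numDirected).trans_le hsum
    · obtain ⟨σ, hσ, hσmem⟩ := exists_hasSections_of_mem_bFam D hp1 he
      refine ⟨k, σ * s, fun x => ((if x = pathLetter j then some j else none), σ x) :: ws x,
        ?_, fun x => ?_, ?_⟩
      · simpa [Word.eval, mul_assoc] using hσ.mul hs
      · obtain ⟨hwx, hwxeval, hwxlen⟩ := hws x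
        refine ⟨List.forall_mem_cons.mpr ⟨hσmem x, hwx⟩, by simp [Word.eval, ← hwxeval], ?_⟩
        simpa [Word.numDirected] using hwxlen
      · simp only [Word.numDirected, List.countP_cons, Option.isSome_some] at hsum ⊢
        have hone : ∑ x : Fin p,
            (if (if x = pathLetter j then some j else none).isSome then 1 else 0) = 1 := by
          simp [apply_ite]
        rw [Finset.sum_add_distrib, hone, if_pos trivial]
        omega

theorem IsWord.exists_sections_of_directed {w : Word p} (hw : IsWord D hp1 w)
    (hdir : ∀ e ∈ w, e.1.isSome) :
    ∃ t : Fin p → Equiv.Perm (Vtx p), hasSections w.eval t ∧ ∀ y, ∃ v, IsWord D hp1 v ∧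
      v.eval = t y ∧ v.numDirected = w.countP fun e => e.1.map pathLetter = some y := by
  induction w with
  | nil =>
    exact ⟨1, by simpa [Word.eval] using hasSections_one,
      fun _ => ⟨[], by simp [IsWord], rfl, by simp [Word.numDirected]⟩⟩
  | cons e w ih =>
    obtain ⟨he, hw'⟩ := List.forall_mem_cons.mp hw
    obtain ⟨hedir, hdir'⟩ := List.forall_mem_cons.mp hdir
    obtain ⟨t, ht, hvs⟩ := ih hw' hdir'
    rcases e with ⟨_ | j, c⟩
    · simp at hedir
    obtain ⟨σ, hσ, hσmem⟩ := exists_hasSections_of_mem_bFam D hp1 he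
    refine ⟨σ * t, by simpa [Word.eval] using hσ.mul ht, fun y => ?_⟩
    obtain ⟨v, hv, hveval, hvcount⟩ := hvs y
    refine ⟨((if y = pathLetter j then some j else none), σ y) :: v,
      List.forall_mem_cons.mpr ⟨hσmem y, hv⟩, by simp [Word.eval, ← hveval], ?_⟩
    simp only [Word.numDirected, List.countP_cons] at hvcount ⊢
    by_cases hy : y = pathLetter j <;> simp [hy, hvcount, eq_comm]

end Words

section Main

variable {p : ℕ} [NeZero p] {D : SpinalData p} {hp1 : 1 < p}
variable {g : Equiv.Perm (Vtx p)} {k : ℕ} {s : Fin p → Equiv.Perm (Vtx p)}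

theorem sum_dlen_sections_le (hg : g ∈ D.grp hp1) (hs : hasSections (g * (aAut p ^ k)⁻¹) s) :
    ∑ x, dlen D hp1 (s x) ≤ dlen D hp1 g := by
  obtain ⟨w, hw, rfl, hwdlen⟩ := exists_word_numDirected_eq_dlen hg
  obtain ⟨k₀, s₀, ws, hs₀, hws, hsum⟩ := hw.exists_sections
  obtain rfl := hs.eq_of_mul_aAut_pow_inv hs₀
  calc ∑ x, dlen D hp1 (s x) ≤ ∑ x, (ws x).numDirected :=
        Finset.sum_le_sum fun x _ => (hws x).2.1 ▸ dlen_le_numDirected (hws x).1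
    _ ≤ w.numDirected := hsum
    _ = dlen D hp1 w.eval := hwdlen

theorem dlen_section_le (hg : g ∈ D.grp hp1) (hs : hasSections (g * (aAut p ^ k)⁻¹) s)
    (x : Fin p) : dlen D hp1 (s x) ≤ dlen D hp1 g :=
  (Finset.single_le_sum (fun _ _ => Nat.zero_le _) (Finset.mem_univ x)).trans
    (sum_dlen_sections_le hg hs)

/-- If a section of `g` is as long as `g`, all syllables of `g` land in that section, and
no two adjacent ones can be merged. -/
theorem exists_directed_chain_word_of_dlen_section_eq (hg : g ∈ D.grp hp1)
    (hs : hasSections (g * (aAut p ^ k)⁻¹) s) {x : Fin p}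
    (hx : dlen D hp1 (s x) = dlen D hp1 g) :
    ∃ v : Word p, IsWord D hp1 v ∧ v.eval = s x ∧ v.length = dlen D hp1 g ∧
      (∀ e ∈ v, e.1.isSome) ∧ v.IsChain fun e e' => e.1 ≠ e'.1 := by
  obtain ⟨w, hw, rfl, hwdlen⟩ := exists_word_numDirected_eq_dlen hg
  obtain ⟨k₀, s₀, ws, hs₀, hws, -⟩ := hw.exists_sections
  obtain rfl := hs.eq_of_mul_aAut_pow_inv hs₀
  obtain ⟨hv, hveval, hvlen⟩ := hws x
  have hvdlen : dlen D hp1 (ws x).eval ≤ (ws x).numDirected := dlen_le_numDirected hv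
  have hvdir : (ws x).numDirected ≤ (ws x).length := List.countP_le_length
  rw [hveval, hx, ← hwdlen] at hvdlen
  have hdirlen : (ws x).numDirected = (ws x).length := by omega
  refine ⟨ws x, hv, hveval, by omega, List.countP_eq_length.mp hdirlen, ?_⟩
  by_contra hch
  obtain ⟨u, hu, hueval, hulen⟩ := hv.exists_shorter hch
  have hudlen := dlen_le_numDirected hu
  have hudir : u.numDirected ≤ u.length := List.countP_le_length
  rw [hueval, hveval] at hudlen
  omega

theorem two_mul_dlen_sections_le {v : Word p} (hv : IsWord D hp1 v)
    (hdir : ∀ e ∈ v, e.1.isSome) (hch : v.IsChain fun e e' => e.1 ≠ e'.1)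
    {t : Fin p → Equiv.Perm (Vtx p)}
    (ht : hasSections (v.eval * (aAut p ^ k)⁻¹) t) (y : Fin p) :
    2 * dlen D hp1 (t y) ≤ v.length + 1 := by
  obtain ⟨t₀, ht₀, hus⟩ := hv.exists_sections_of_directed hdir
  obtain rfl := ht.eq_of_mul_aAut_pow_inv (l := 0) (by simpa using ht₀)
  obtain ⟨u, hu, hueval, hucount⟩ := hus y
  have hP := two_mul_countP_le_of_isChain (fun e => e.1.map pathLetter = some y) <|
    hch.imp fun e e' hne hboth => hne <| Option.map_injective pathLetter_injective <| by
      simp only [decide_eq_true_eq] at hboth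
      rw [hboth.1, hboth.2]
  have hudlen := dlen_le_numDirected hu
  rw [hueval] at hudlen
  omega

end Main

theorem stmt6_general (p : ℕ) (hp : p.Prime) [NeZero p]
    (D : SpinalData p) :
    ∀ g ∈ D.grp hp.one_lt, ∀ (k : ℕ) (s : Fin p → Equiv.Perm (Vtx p)),
      (∀ x, s x ∈ D.grp hp.one_lt) →
      hasSections (g * (aAut p ^ k)⁻¹) s →
      (∑ x : Fin p, dlen D hp.one_lt (s x)) ≤ dlen D hp.one_lt g ∧
      (1 < dlen D hp.one_lt g →
        ∀ (x : Fin p) (k' : ℕ) (t : Fin p → Equiv.Perm (Vtx p)),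
          (∀ y, t y ∈ D.grp hp.one_lt) →
          hasSections (s x * (aAut p ^ k')⁻¹) t →
          ∀ y, dlen D hp.one_lt (t y) < dlen D hp.one_lt g) := by
  intro g hg k s hsG hs
  refine ⟨sum_dlen_sections_le hg hs, fun hN x k' t _ ht y => ?_⟩
  have hty := dlen_section_le (hsG x) ht y
  rcases (dlen_section_le hg hs x).lt_or_eq with hlt | heq
  · exact hty.trans_lt hlt
  · obtain ⟨v, hv, hveval, hvlen, hdir, hch⟩ :=
      exists_directed_chain_word_of_dlen_section_eq hg hs heq
    rw [← hveval] at ht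
    have := two_mul_dlen_sections_le hv hdir hch ht y
    omega

theorem stmt6 (p : ℕ) (hp : p.Prime) (hodd : Odd p) [NeZero p]
    (D : SpinalData p) :
    ∀ g ∈ D.grp hp.one_lt, ∀ (k : ℕ) (s : Fin p → Equiv.Perm (Vtx p)),
      (∀ x, s x ∈ D.grp hp.one_lt) →
      hasSections (g * (aAut p ^ k)⁻¹) s →
      (∑ x : Fin p, dlen D hp.one_lt (s x)) ≤ dlen D hp.one_lt g ∧
      (1 < dlen D hp.one_lt g →
        ∀ (x : Fin p) (k' : ℕ) (t : Fin p → Equiv.Perm (Vtx p)),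
          (∀ y, t y ∈ D.grp hp.one_lt) →
          hasSections (s x * (aAut p ^ k')⁻¹) t →
          ∀ y, dlen D hp.one_lt (t y) < dlen D hp.one_lt g) :=
  stmt6_general p hp D

end GMS
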